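/- The DePa query algorithm is correct: let v be a vertex with no proper descendants having v's fork-path as a strict prefix at greater depth (i.e., v is the current vertex of a leaf task, so that for every strict prefix p of f(v), the suspended-depth table stores the maximum dag-depth among vertices with fork-path p that precede v). Then for any vertex u, with p = lcp(f(u), f(v)): if p = f(v), then u ≼ v iff d(u) ≤ d(v); otherwise u ≼ v iff d(u) ≤ SuspendedDepths[p]. -/

import Mathlib

/-- Series-parallel dag shapes: a single vertex, serial composition
(identifying the sink of `g1` with the source of `g2`), or parallel
composition (fresh source with edges to the sources of `g1`, `g2`, and a
fresh sink with edges from their sinks). -/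
inductive SP : Type where
  | vert : SP
  | seq : SP → SP → SP
  | par : SP → SP → SP

/-- Non-source vertices of a series-parallel dag. -/
def NV : SP → Type
  | .vert => Empty
  | .seq g1 g2 => NV g1 ⊕ NV g2
  | .par g1 g2 => ((Unit ⊕ NV g1) ⊕ (Unit ⊕ NV g2)) ⊕ Unit

/-- Vertices: the source, or a non-source vertex. -/
abbrev V (g : SP) : Type := Unit ⊕ NV g

/-- The (unique) source of a series-parallel dag. -/
def src (g : SP) : V g := Sum.inl ()

/-- Embedding of the first component of a serial composition. -/
def emb1 (g1 g2 : SP) : V g1 → V (.seq g1 g2)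
  | .inl _ => Sum.inl ()
  | .inr n => Sum.inr (Sum.inl n)

/-- The (unique) sink of a series-parallel dag. -/
def snk : (g : SP) → V g
  | .vert => Sum.inl ()
  | .seq g1 g2 =>
    match snk g2 with
    | .inl _ => emb1 g1 g2 (snk g1)
    | .inr n => Sum.inr (Sum.inr n)
  | .par _ _ => Sum.inr (Sum.inr ())

/-- Embedding of the second component of a serial composition:
the source of `g2` is identified with the sink of `g1`. -/
def emb2 (g1 g2 : SP) : V g2 → V (.seq g1 g2)
  | .inl _ => emb1 g1 g2 (snk g1)
  | .inr n => Sum.inr (Sum.inr n)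

/-- Embedding of the left branch of a parallel composition. -/
def embL (g1 g2 : SP) (v : V g1) : V (.par g1 g2) := Sum.inr (Sum.inl (Sum.inl v))

/-- Embedding of the right branch of a parallel composition. -/
def embR (g1 g2 : SP) (v : V g2) : V (.par g1 g2) := Sum.inr (Sum.inl (Sum.inr v))

/-- Edges of a series-parallel dag. -/
def Edge : (g : SP) → V g → V g → Prop
  | .vert, _, _ => False
  | .seq g1 g2, u, v =>
      (∃ a b, Edge g1 a b ∧ u = emb1 g1 g2 a ∧ v = emb1 g1 g2 b) ∨
      (∃ a b, Edge g2 a b ∧ u = emb2 g1 g2 a ∧ v = emb2 g1 g2 b)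
  | .par g1 g2, u, v =>
      (∃ a b, Edge g1 a b ∧ u = embL g1 g2 a ∧ v = embL g1 g2 b) ∨
      (∃ a b, Edge g2 a b ∧ u = embR g1 g2 a ∧ v = embR g1 g2 b) ∨
      (u = src (.par g1 g2) ∧ v = embL g1 g2 (src g1)) ∨
      (u = src (.par g1 g2) ∧ v = embR g1 g2 (src g2)) ∨
      (u = embL g1 g2 (snk g1) ∧ v = snk (.par g1 g2)) ∨
      (u = embR g1 g2 (snk g2) ∧ v = snk (.par g1 g2))

/-- `Reach g u v` (`u ≼ v`): there is a directed path (possibly empty) from `u` to `v`. -/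
def Reach (g : SP) : V g → V g → Prop := Relation.ReflTransGen (Edge g)

/-- The dag-depth of a vertex (the length of a longest path ending at it),
computed by the DePa rules: the source has depth 0; at a fork both children
have depth one greater; at a join the new vertex has depth
`1 + max` of the depths of the joining vertices. -/
def depth : (g : SP) → V g → ℕ
  | .vert, _ => 0
  | .seq _ _, .inl _ => 0
  | .seq g1 _, .inr (.inl n) => depth g1 (Sum.inr n)
  | .seq g1 g2, .inr (.inr n) => depth g1 (snk g1) + depth g2 (Sum.inr n)
  | .par _ _, .inl _ => 0
  | .par g1 _, .inr (.inl (.inl v)) => 1 + depth g1 v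
  | .par _ g2, .inr (.inl (.inr v)) => 1 + depth g2 v
  | .par g1 g2, .inr (.inr _) => 1 + max (1 + depth g1 (snk g1)) (1 + depth g2 (snk g2))

/-- The fork-path of a vertex, as a list of bits (`false` = L, `true` = R),
outermost fork first: the root has the empty path, a fork extends the path by
L and R for the two branches, and a join restores the common prefix. -/
def fpath : (g : SP) → V g → List Bool
  | .vert, _ => []
  | .seq _ _, .inl _ => []
  | .seq g1 _, .inr (.inl n) => fpath g1 (Sum.inr n)
  | .seq _ g2, .inr (.inr n) => fpath g2 (Sum.inr n)
  | .par _ _, .inl _ => []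
  | .par g1 _, .inr (.inl (.inl v)) => false :: fpath g1 v
  | .par _ g2, .inr (.inl (.inr v)) => true :: fpath g2 v
  | .par _ _, .inr (.inr _) => []

/-- Longest common prefix of two lists. -/
def lcp : List Bool → List Bool → List Bool
  | a :: as, b :: bs => if a = b then a :: lcp as bs else []
  | _, _ => []

/-!
Every edge raises the dag-depth and pushes or pops a single fork bit. Vertices whose fork-paths
are prefix-comparable are `≼`-comparable, and between comparable vertices `≼` is decided by
depth; this gives both "if" directions. Conversely, a path from `u` to `v` passes through a
vertex with fork-path `lcp (f u) (f v)`: the lcp with `f v` cannot change along the path before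
it enters a vertex whose fork-path is a prefix of `f v`. That vertex precedes `v`, so its depth
is at most the suspended depth.
-/

open List

theorem List.IsPrefix.antisymm {α : Type*} {l₁ l₂ : List α} (h₁ : l₁ <+: l₂)
    (h₂ : l₂ <+: l₁) : l₁ = l₂ :=
  h₁.eq_of_length (h₁.length_le.antisymm h₂.length_le)

theorem prefix_lcp_iff {p : List Bool} :
    ∀ {a b : List Bool}, p <+: lcp a b ↔ p <+: a ∧ p <+: b := by
  induction p with
  | nil => simp
  | cons z p ih =>
    rintro (_ | ⟨x, a⟩) (_ | ⟨y, b⟩)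
    · simp [lcp]
    · simp [lcp]
    · simp [lcp]
    by_cases hxy : x = y
    · subst hxy
      simp only [lcp, if_true, cons_prefix_cons, ih]
      exact and_and_left
    · simp only [lcp, hxy, if_false, prefix_nil, reduceCtorEq, false_iff, cons_prefix_cons]
      rintro ⟨⟨rfl, -⟩, rfl, -⟩
      exact hxy rfl

theorem lcp_prefix_left (a b : List Bool) : lcp a b <+: a :=
  (prefix_lcp_iff.1 prefix_rfl).1

theorem lcp_prefix_right (a b : List Bool) : lcp a b <+: b :=
  (prefix_lcp_iff.1 prefix_rfl).2

theorem lcp_eq_left {a b : List Bool} (h : a <+: b) : lcp a b = a :=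
  (lcp_prefix_left a b).antisymm (prefix_lcp_iff.2 ⟨prefix_rfl, h⟩)

theorem lcp_concat_of_not_prefix {l t : List Bool} {x : Bool} (h : ¬l ++ [x] <+: t) :
    lcp (l ++ [x]) t = lcp l t := by
  refine IsPrefix.antisymm (prefix_lcp_iff.2 ⟨?_, lcp_prefix_right _ _⟩)
    (prefix_lcp_iff.2 ⟨(lcp_prefix_left l t).trans (prefix_append l [x]), lcp_prefix_right _ _⟩)
  rcases prefix_concat_iff.1 (lcp_prefix_left (l ++ [x]) t) with heq | hl
  · exact absurd (heq ▸ lcp_prefix_right _ _) h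
  · exact hl

section Embeddings

variable {g1 g2 : SP}

theorem seq_vertex_cases (w : V (.seq g1 g2)) :
    (∃ a, w = emb1 g1 g2 a) ∨ ∃ b, w = emb2 g1 g2 b := by
  rcases w with _ | n | n
  · exact Or.inl ⟨src g1, rfl⟩
  · exact Or.inl ⟨.inr n, rfl⟩
  · exact Or.inr ⟨.inr n, rfl⟩

theorem par_vertex_cases (w : V (.par g1 g2)) :
    w = src _ ∨ w = snk _ ∨ (∃ a, w = embL g1 g2 a) ∨ ∃ b, w = embR g1 g2 b := by
  rcases w with _ | (a | b) | _
  · exact Or.inl rfl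
  · exact Or.inr (Or.inr (Or.inl ⟨a, rfl⟩))
  · exact Or.inr (Or.inr (Or.inr ⟨b, rfl⟩))
  · exact Or.inr (Or.inl rfl)

@[simp] theorem fpath_src (g : SP) : fpath g (src g) = [] := by
  cases g <;> rfl

@[simp] theorem depth_src (g : SP) : depth g (src g) = 0 := by
  cases g <;> rfl

@[simp] theorem fpath_emb1 (a : V g1) : fpath (.seq g1 g2) (emb1 g1 g2 a) = fpath g1 a := by
  rcases a with _ | n
  · exact (fpath_src g1).symm
  · rfl

@[simp] theorem depth_emb1 (a : V g1) : depth (.seq g1 g2) (emb1 g1 g2 a) = depth g1 a := by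
  rcases a with _ | n
  · exact (depth_src g1).symm
  · rfl

@[simp] theorem fpath_snk (g : SP) : fpath g (snk g) = [] := by
  induction g with
  | vert => rfl
  | seq g1 g2 ih1 ih2 =>
    unfold snk
    split
    · rw [fpath_emb1, ih1]
    · rename_i n h
      show fpath g2 (Sum.inr n) = []
      rw [← h, ih2]
  | par => rfl

theorem snk_seq : snk (.seq g1 g2) = emb2 g1 g2 (snk g2) := by
  show (match snk g2 with
    | .inl _ => emb1 g1 g2 (snk g1)
    | .inr n => Sum.inr (Sum.inr n)) = emb2 g1 g2 (snk g2)
  cases snk g2 <;> rfl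

@[simp] theorem fpath_emb2 (b : V g2) : fpath (.seq g1 g2) (emb2 g1 g2 b) = fpath g2 b := by
  rcases b with _ | n
  · exact (fpath_emb1 (snk g1)).trans ((fpath_snk g1).trans (fpath_src g2).symm)
  · rfl

@[simp] theorem depth_emb2 (b : V g2) :
    depth (.seq g1 g2) (emb2 g1 g2 b) = depth g1 (snk g1) + depth g2 b := by
  rcases b with _ | n
  · show depth _ (emb1 g1 g2 (snk g1)) = depth g1 (snk g1) + depth g2 (src g2)
    simp
  · rfl

@[simp] theorem fpath_embL (a : V g1) : fpath (.par g1 g2) (embL g1 g2 a) = false :: fpath g1 a :=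
  rfl

@[simp] theorem fpath_embR (b : V g2) : fpath (.par g1 g2) (embR g1 g2 b) = true :: fpath g2 b :=
  rfl

@[simp] theorem depth_embL (a : V g1) : depth (.par g1 g2) (embL g1 g2 a) = 1 + depth g1 a :=
  rfl

@[simp] theorem depth_embR (b : V g2) : depth (.par g1 g2) (embR g1 g2 b) = 1 + depth g2 b :=
  rfl

@[simp] theorem depth_snk_par :
    depth (.par g1 g2) (snk _) = 1 + max (1 + depth g1 (snk g1)) (1 + depth g2 (snk g2)) :=
  rfl

theorem edge_emb1 {a b : V g1} (h : Edge g1 a b) :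
    Edge (.seq g1 g2) (emb1 g1 g2 a) (emb1 g1 g2 b) :=
  Or.inl ⟨a, b, h, rfl, rfl⟩

theorem edge_emb2 {a b : V g2} (h : Edge g2 a b) :
    Edge (.seq g1 g2) (emb2 g1 g2 a) (emb2 g1 g2 b) :=
  Or.inr ⟨a, b, h, rfl, rfl⟩

theorem edge_embL {a b : V g1} (h : Edge g1 a b) :
    Edge (.par g1 g2) (embL g1 g2 a) (embL g1 g2 b) :=
  Or.inl ⟨a, b, h, rfl, rfl⟩

theorem edge_embR {a b : V g2} (h : Edge g2 a b) :
    Edge (.par g1 g2) (embR g1 g2 a) (embR g1 g2 b) :=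
  Or.inr (Or.inl ⟨a, b, h, rfl, rfl⟩)

theorem edge_src_embL : Edge (.par g1 g2) (src _) (embL g1 g2 (src g1)) :=
  Or.inr (Or.inr (Or.inl ⟨rfl, rfl⟩))

theorem edge_src_embR : Edge (.par g1 g2) (src _) (embR g1 g2 (src g2)) :=
  Or.inr (Or.inr (Or.inr (Or.inl ⟨rfl, rfl⟩)))

theorem edge_embL_snk : Edge (.par g1 g2) (embL g1 g2 (snk g1)) (snk _) :=
  Or.inr (Or.inr (Or.inr (Or.inr (Or.inl ⟨rfl, rfl⟩))))

theorem edge_embR_snk : Edge (.par g1 g2) (embR g1 g2 (snk g2)) (snk _) :=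
  Or.inr (Or.inr (Or.inr (Or.inr (Or.inr ⟨rfl, rfl⟩))))

theorem reach_emb1 {a b : V g1} (h : Reach g1 a b) :
    Reach (.seq g1 g2) (emb1 g1 g2 a) (emb1 g1 g2 b) :=
  Relation.ReflTransGen.lift (emb1 g1 g2) (fun _ _ => edge_emb1) _ _ h

theorem reach_emb2 {a b : V g2} (h : Reach g2 a b) :
    Reach (.seq g1 g2) (emb2 g1 g2 a) (emb2 g1 g2 b) :=
  Relation.ReflTransGen.lift (emb2 g1 g2) (fun _ _ => edge_emb2) _ _ h

theorem reach_embL {a b : V g1} (h : Reach g1 a b) :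
    Reach (.par g1 g2) (embL g1 g2 a) (embL g1 g2 b) :=
  Relation.ReflTransGen.lift (embL g1 g2) (fun _ _ => edge_embL) _ _ h

theorem reach_embR {a b : V g2} (h : Reach g2 a b) :
    Reach (.par g1 g2) (embR g1 g2 a) (embR g1 g2 b) :=
  Relation.ReflTransGen.lift (embR g1 g2) (fun _ _ => edge_embR) _ _ h

end Embeddings

theorem src_reach (g : SP) (w : V g) : Reach g (src g) w := by
  induction g with
  | vert =>
    rcases w with _ | ⟨⟨⟩⟩
    exact .refl
  | seq g1 g2 ih1 ih2 =>
    rcases seq_vertex_cases w with ⟨a, rfl⟩ | ⟨b, rfl⟩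
    · exact reach_emb1 (ih1 a)
    · exact (reach_emb1 (ih1 (snk g1))).trans (reach_emb2 (ih2 b))
  | par g1 g2 ih1 ih2 =>
    rcases par_vertex_cases w with rfl | rfl | ⟨a, rfl⟩ | ⟨b, rfl⟩
    · exact .refl
    · exact .head edge_src_embL ((reach_embL (ih1 (snk g1))).tail edge_embL_snk)
    · exact .head edge_src_embL (reach_embL (ih1 a))
    · exact .head edge_src_embR (reach_embR (ih2 b))

theorem reach_snk (g : SP) (w : V g) : Reach g w (snk g) := by
  induction g with
  | vert =>
    rcases w with _ | ⟨⟨⟩⟩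
    exact .refl
  | seq g1 g2 ih1 ih2 =>
    rw [snk_seq]
    rcases seq_vertex_cases w with ⟨a, rfl⟩ | ⟨b, rfl⟩
    · exact (reach_emb1 (ih1 a)).trans (reach_emb2 (ih2 (src g2)))
    · exact reach_emb2 (ih2 b)
  | par g1 g2 ih1 ih2 =>
    rcases par_vertex_cases w with rfl | rfl | ⟨a, rfl⟩ | ⟨b, rfl⟩
    · exact src_reach _ _
    · exact .refl
    · exact (reach_embL (ih1 a)).tail edge_embL_snk
    · exact (reach_embR (ih2 b)).tail edge_embR_snk

theorem reach_emb1_emb2 {g1 g2 : SP} (a : V g1) (b : V g2) :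
    Reach (.seq g1 g2) (emb1 g1 g2 a) (emb2 g1 g2 b) :=
  (reach_emb1 (reach_snk g1 a)).trans (reach_emb2 (src_reach g2 b))

theorem Edge.depth_lt {g : SP} {a b : V g} (h : Edge g a b) : depth g a < depth g b := by
  induction g with
  | vert => exact h.elim
  | seq g1 g2 ih1 ih2 =>
    rcases h with ⟨x, y, e, rfl, rfl⟩ | ⟨x, y, e, rfl, rfl⟩
    · simpa using ih1 e
    · simpa using ih2 e
  | par g1 g2 ih1 ih2 =>
    rcases h with ⟨x, y, e, rfl, rfl⟩ | ⟨x, y, e, rfl, rfl⟩ | ⟨rfl, rfl⟩ |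
      ⟨rfl, rfl⟩ | ⟨rfl, rfl⟩ | ⟨rfl, rfl⟩
    · simpa using ih1 e
    · simpa using ih2 e
    · simp
    · simp
    · simp only [depth_embL, depth_snk_par]
      omega
    · simp only [depth_embR, depth_snk_par]
      omega

theorem Reach.depth_le {g : SP} {a b : V g} (h : Reach g a b) : depth g a ≤ depth g b := by
  induction h with
  | refl => exact le_rfl
  | tail _ e ih => exact ih.trans e.depth_lt.le

theorem Reach.eq_of_depth_le {g : SP} {a b : V g} (h : Reach g a b)
    (hd : depth g b ≤ depth g a) : a = b := by
  rcases h.cases_head with rfl | ⟨c, e, hcb⟩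
  · rfl
  · exact absurd hd (e.depth_lt.trans_le (Reach.depth_le hcb)).not_ge

theorem Edge.fpath_push_or_pop {g : SP} {a b : V g} (h : Edge g a b) :
    ∃ x, fpath g b = fpath g a ++ [x] ∨ fpath g a = fpath g b ++ [x] := by
  induction g with
  | vert => exact h.elim
  | seq g1 g2 ih1 ih2 =>
    rcases h with ⟨x, y, e, rfl, rfl⟩ | ⟨x, y, e, rfl, rfl⟩
    · simpa using ih1 e
    · simpa using ih2 e
  | par g1 g2 ih1 ih2 =>
    rcases h with ⟨x, y, e, rfl, rfl⟩ | ⟨x, y, e, rfl, rfl⟩ | ⟨rfl, rfl⟩ |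
      ⟨rfl, rfl⟩ | ⟨rfl, rfl⟩ | ⟨rfl, rfl⟩
    · simpa using ih1 e
    · simpa using ih2 e
    · exact ⟨false, Or.inl (by simp)⟩
    · exact ⟨true, Or.inl (by simp)⟩
    · exact ⟨false, Or.inr (by simp)⟩
    · exact ⟨true, Or.inr (by simp)⟩

theorem Reach.exists_fpath_eq_lcp {g : SP} {u v : V g} (h : Reach g u v) :
    ∃ w, fpath g w = lcp (fpath g u) (fpath g v) ∧ Reach g u w ∧ Reach g w v := by
  induction h using Relation.ReflTransGen.head_induction_on with
  | refl => exact ⟨v, (lcp_eq_left prefix_rfl).symm, .refl, .refl⟩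
  | @head x y e hyv ih =>
    by_cases hx : fpath g x <+: fpath g v
    · exact ⟨x, (lcp_eq_left hx).symm, .refl, .head e hyv⟩
    obtain ⟨w, hw, hyw, hwv⟩ := ih
    refine ⟨w, hw.trans ?_, .head e hyw, hwv⟩
    obtain ⟨b, hyx | hxy⟩ := e.fpath_push_or_pop
    · rw [hyx, lcp_concat_of_not_prefix fun h => hx ((prefix_append _ _).trans h)]
    · rw [hxy] at hx ⊢
      exact (lcp_concat_of_not_prefix hx).symm

theorem reach_or_reach_of_fpath_prefix {g : SP} {u v : V g} (h : fpath g u <+: fpath g v) :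
    Reach g u v ∨ Reach g v u := by
  induction g with
  | vert =>
    rcases u with _ | ⟨⟨⟩⟩
    exact Or.inl (src_reach _ v)
  | seq g1 g2 ih1 ih2 =>
    rcases seq_vertex_cases u with ⟨a, rfl⟩ | ⟨a, rfl⟩ <;>
      rcases seq_vertex_cases v with ⟨b, rfl⟩ | ⟨b, rfl⟩
    · simp only [fpath_emb1] at h
      exact (ih1 h).imp reach_emb1 reach_emb1
    · exact Or.inl (reach_emb1_emb2 a b)
    · exact Or.inr (reach_emb1_emb2 b a)
    · simp only [fpath_emb2] at h
      exact (ih2 h).imp reach_emb2 reach_emb2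
  | par g1 g2 ih1 ih2 =>
    rcases par_vertex_cases u with rfl | rfl | ⟨a, rfl⟩ | ⟨a, rfl⟩
    · exact Or.inl (src_reach _ v)
    · exact Or.inr (reach_snk _ v)
    all_goals rcases par_vertex_cases v with rfl | rfl | ⟨b, rfl⟩ | ⟨b, rfl⟩
    · exact Or.inr (src_reach _ _)
    · exact Or.inl (reach_snk _ _)
    · simp only [fpath_embL, cons_prefix_cons, true_and] at h
      exact (ih1 h).imp reach_embL reach_embL
    · simp at h
    · exact Or.inr (src_reach _ _)
    · exact Or.inl (reach_snk _ _)
    · simp at h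
    · simp only [fpath_embR, cons_prefix_cons, true_and] at h
      exact (ih2 h).imp reach_embR reach_embR

theorem reach_of_fpath_prefix_of_depth_le {g : SP} {u c : V g} (h : fpath g c <+: fpath g u)
    (hd : depth g u ≤ depth g c) : Reach g u c :=
  (reach_or_reach_of_fpath_prefix h).elim (fun hcu => hcu.eq_of_depth_le hd ▸ .refl) id

theorem depa_query_correct_general (g : SP) (u v : V g) :
    (lcp (fpath g u) (fpath g v) = fpath g v →
      (Reach g u v ↔ depth g u ≤ depth g v)) ∧
    (∀ c : V g, lcp (fpath g u) (fpath g v) ≠ fpath g v →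
      fpath g c = lcp (fpath g u) (fpath g v) → Reach g c v →
      (∀ c' : V g, fpath g c' = fpath g c → Reach g c' v →
        depth g c' ≤ depth g c) →
      (Reach g u v ↔ depth g u ≤ depth g c)) := by
  refine ⟨fun hv => ⟨Reach.depth_le, fun hd => ?_⟩,
    fun c _ hc hcv hmax => ⟨fun huv => ?_, fun hd => ?_⟩⟩
  · exact reach_of_fpath_prefix_of_depth_le (hv ▸ lcp_prefix_left _ _) hd
  · obtain ⟨w, hw, huw, hwv⟩ := huv.exists_fpath_eq_lcp
    exact huw.depth_le.trans (hmax w (hw.trans hc.symm) hwv)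
  · exact (reach_of_fpath_prefix_of_depth_le (hc ▸ lcp_prefix_left _ _) hd).trans hcv

/-- DePa query correctness: let `v` be the current vertex of a
leaf task, i.e. every vertex whose fork-path is a strict prefix of `f(v)` with
depth at most `d(v)` precedes `v`.  Let `p = lcp (f u) (f v)`.  If `p = f(v)`
then `u ≼ v ↔ d(u) ≤ d(v)`; otherwise, `u ≼ v ↔ d(u) ≤ SuspendedDepths[p]`,
where `SuspendedDepths[p]` is the maximum dag-depth of a vertex with fork-path
`p` preceding `v`. -/
theorem depa_query_correct (g : SP) (u v : V g)
    (hleaf : ∀ w : V g, fpath g w <+: fpath g v → fpath g w ≠ fpath g v →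
      depth g w ≤ depth g v → Reach g w v) :
    (lcp (fpath g u) (fpath g v) = fpath g v →
      (Reach g u v ↔ depth g u ≤ depth g v)) ∧
    (∀ c : V g, lcp (fpath g u) (fpath g v) ≠ fpath g v →
      fpath g c = lcp (fpath g u) (fpath g v) → Reach g c v →
      (∀ c' : V g, fpath g c' = fpath g c → Reach g c' v →
        depth g c' ≤ depth g c) →
      (Reach g u v ↔ depth g u ≤ depth g c)) :=
  depa_query_correct_general g u v
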